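/- arXiv:1604.04302 — 8 statements merged into one kernel-verified Lean document; each statement's English description precedes it below -/
import Mathlib

section
/- For any nonnegative real numbers x_1, ..., x_n with geometric mean x = (x_1 x_2 ⋯ x_n)^{1/n}, one has (x_1 + x_2 + ⋯ + x_n)/n ≥ x + (1/n) ∑_{i=1}^n (√x_i − √x)². -/
/-!
Write `g` for the geometric mean. Expanding the squares, the claim becomes `n * √g ≤ ∑ √xᵢ`, and
`√g` is the geometric mean of the `√xᵢ`, so this is the AM-GM inequality applied to the
square roots.
-/

open Finset Real

namespace Real

variable {ι : Type*} (s : Finset ι) {x : ι → ℝ}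

theorem card_mul_geom_mean_le_sum (hx : ∀ i ∈ s, 0 ≤ x i) :
    #s * (∏ i ∈ s, x i) ^ ((1 : ℝ) / #s) ≤ ∑ i ∈ s, x i := by
  rcases s.eq_empty_or_nonempty with rfl | hs
  · simp
  have hcard : (0 : ℝ) < #s := by exact_mod_cast hs.card_pos
  have h := geom_mean_le_arith_mean s (fun _ ↦ 1) x (fun _ _ ↦ zero_le_one) (by simpa using hcard) hx
  simp only [rpow_one, sum_const, nsmul_eq_mul, mul_one, one_mul] at h
  rw [one_div]
  exact (le_div_iff₀' hcard).mp h

theorem sqrt_geom_mean (hx : ∀ i ∈ s, 0 ≤ x i) (r : ℝ) :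
    √((∏ i ∈ s, x i) ^ r) = (∏ i ∈ s, √(x i)) ^ r := by
  have hprod : 0 ≤ ∏ i ∈ s, x i := prod_nonneg hx
  rw [← sqrt_prod s hx, sqrt_eq_rpow, sqrt_eq_rpow, ← rpow_mul hprod, ← rpow_mul hprod, mul_comm]

theorem sum_sq_sqrt_sub_sqrt (hx : ∀ i ∈ s, 0 ≤ x i) {c : ℝ} (hc : 0 ≤ c) :
    ∑ i ∈ s, (√(x i) - √c) ^ 2 = ∑ i ∈ s, x i - 2 * √c * ∑ i ∈ s, √(x i) + #s * c := by
  have hterm : ∀ i ∈ s, (√(x i) - √c) ^ 2 = x i - 2 * √c * √(x i) + c := fun i hi ↦ by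
    rw [sub_sq, sq_sqrt (hx i hi), sq_sqrt hc]; ring
  rw [sum_congr rfl hterm, sum_add_distrib, sum_sub_distrib, sum_const, nsmul_eq_mul, mul_sum]

theorem card_mul_geom_mean_add_sum_sq_le_sum (hx : ∀ i ∈ s, 0 ≤ x i) :
    #s * (∏ i ∈ s, x i) ^ ((1 : ℝ) / #s) +
        ∑ i ∈ s, (√(x i) - √((∏ i ∈ s, x i) ^ ((1 : ℝ) / #s))) ^ 2 ≤ ∑ i ∈ s, x i := by
  set g := (∏ i ∈ s, x i) ^ ((1 : ℝ) / #s)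
  have hg : 0 ≤ g := rpow_nonneg (prod_nonneg hx) _
  have hamgm : #s * √g ≤ ∑ i ∈ s, √(x i) := by
    rw [sqrt_geom_mean s hx]
    exact card_mul_geom_mean_le_sum s fun i _ ↦ sqrt_nonneg _
  have hmul : #s * g ≤ √g * ∑ i ∈ s, √(x i) := by
    calc #s * g = √g * (#s * √g) := by linear_combination -(#s : ℝ) * mul_self_sqrt hg
      _ ≤ √g * ∑ i ∈ s, √(x i) := mul_le_mul_of_nonneg_left hamgm (sqrt_nonneg g)
  rw [sum_sq_sqrt_sub_sqrt s hx hg]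
  linarith

end Real

theorem quantitative_amgm (n : ℕ) (hn : 1 ≤ n) (x : Fin n → ℝ) (hx : ∀ i, 0 ≤ x i) :
    (∑ i, x i) / n ≥
      (∏ i, x i) ^ ((1 : ℝ) / n) +
        (1 / n) * ∑ i, (Real.sqrt (x i) - Real.sqrt ((∏ i, x i) ^ ((1 : ℝ) / n))) ^ 2 := by
  have hnpos : (0 : ℝ) < n := by exact_mod_cast hn
  have h := card_mul_geom_mean_add_sum_sq_le_sum univ fun i _ ↦ hx i
  rw [card_univ, Fintype.card_fin] at h
  rw [ge_iff_le, le_div_iff₀ hnpos, add_mul, one_div_mul_eq_div, div_mul_cancel₀ _ hnpos.ne']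
  linarith
end

section
/- For nonnegative reals x_1, ..., x_n with geometric mean x = (x_1⋯x_n)^{1/n}, equality holds in (x_1 + ⋯ + x_n)/n = x + (1/n) ∑_{i=1}^n (√x_i − √x)² if and only if x = 0 (i.e., some x_i is zero) or all the x_i are equal. -/
/-!
Expanding the squares, the defect of the inequality is `2 √G (A - √G)`, where `G` is the
geometric mean of the `xᵢ` and `A` the arithmetic mean of the `√xᵢ`. Since `√G` is the geometric
mean of the `√xᵢ`, equality holds iff `G = 0` or the `√xᵢ` attain equality in AM–GM, i.e. are all
equal.
-/

open Finset Real

theorem Real.sqrt_rpow {a : ℝ} (ha : 0 ≤ a) (r : ℝ) : √(a ^ r) = √a ^ r := by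
  rw [sqrt_eq_rpow, sqrt_eq_rpow, ← rpow_mul ha, ← rpow_mul ha, mul_comm]

theorem Real.sqrt_prod_rpow {ι : Type*} (s : Finset ι) {x : ι → ℝ} (hx : ∀ i ∈ s, 0 ≤ x i)
    (r : ℝ) : √((∏ i ∈ s, x i) ^ r) = ∏ i ∈ s, √(x i) ^ r := by
  rw [sqrt_rpow (prod_nonneg hx), sqrt_prod s hx,
    finsetProd_rpow s _ (fun i _ ↦ sqrt_nonneg _)]

theorem Finset.sum_sqrt_sub_sq {ι : Type*} (s : Finset ι) {x : ι → ℝ} (hx : ∀ i ∈ s, 0 ≤ x i)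
    (c : ℝ) :
    ∑ i ∈ s, (√(x i) - c) ^ 2 = ∑ i ∈ s, x i - 2 * c * ∑ i ∈ s, √(x i) + #s * c ^ 2 := by
  have hterm : ∀ i ∈ s, (√(x i) - c) ^ 2 = x i - 2 * c * √(x i) + c ^ 2 := fun i hi ↦ by
    rw [sub_sq, sq_sqrt (hx i hi)]; ring
  rw [sum_congr rfl hterm, sum_add_distrib, sum_sub_distrib, mul_sum, sum_const, nsmul_eq_mul]

theorem Finset.mean_eq_add_mean_sqrt_sub_sq_iff {ι : Type*} (s : Finset ι) (hs : s.Nonempty)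
    {x : ι → ℝ} (hx : ∀ i ∈ s, 0 ≤ x i) {G : ℝ} (hG : 0 ≤ G) :
    (∑ i ∈ s, x i) / #s = G + (1 / #s) * ∑ i ∈ s, (√(x i) - √G) ^ 2 ↔
      √G = 0 ∨ ∑ i ∈ s, (1 / #s : ℝ) * √(x i) = √G := by
  have hdefect : (∑ i ∈ s, x i) / #s - (G + (1 / #s) * ∑ i ∈ s, (√(x i) - √G) ^ 2) =
      2 * (√G * (∑ i ∈ s, (1 / #s : ℝ) * √(x i) - √G)) := by
    rw [sum_sqrt_sub_sq s hx, ← mul_sum]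
    field_simp
    linear_combination (#s : ℝ) * sq_sqrt hG
  rw [← sub_eq_zero, hdefect, mul_eq_zero, mul_eq_zero, sub_eq_zero, or_iff_right two_ne_zero]

theorem quantitative_amgm_equality (n : ℕ) (hn : 1 ≤ n) (x : Fin n → ℝ) (hx : ∀ i, 0 ≤ x i) :
    (∑ i, x i) / n =
      (∏ i, x i) ^ ((1 : ℝ) / n) +
        (1 / n) * ∑ i, (Real.sqrt (x i) - Real.sqrt ((∏ i, x i) ^ ((1 : ℝ) / n))) ^ 2 ↔
      (∃ i, x i = 0) ∨ (∀ i j, x i = x j) := by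
  have hprod : 0 ≤ ∏ i, x i := prod_nonneg fun i _ ↦ hx i
  have hweights : ∑ _i : Fin n, (1 / n : ℝ) = 1 := by
    rw [sum_const, card_univ, Fintype.card_fin, nsmul_eq_mul, mul_one_div_cancel]
    exact_mod_cast (by omega : n ≠ 0)
  have hmean := mean_eq_add_mean_sqrt_sub_sq_iff univ (univ_nonempty_iff.mpr ⟨⟨0, hn⟩⟩)
    (fun i _ ↦ hx i) (rpow_nonneg hprod ((1 : ℝ) / n))
  rw [card_univ, Fintype.card_fin] at hmean
  rw [hmean, sqrt_eq_zero (rpow_nonneg hprod _), rpow_eq_zero_iff_of_nonneg hprod,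
    prod_eq_zero_iff, sqrt_prod_rpow univ (fun i _ ↦ hx i), eq_comm,
    geom_mean_eq_arith_mean_weighted_iff_of_pos univ _ _ (fun _ _ ↦ by positivity) hweights
      (fun i _ ↦ sqrt_nonneg _)]
  simp [sqrt_inj, hx, Nat.one_le_iff_ne_zero.mp hn]
end

section
/- For any nonnegative real numbers x_1, ..., x_n with geometric mean x = (x_1⋯x_n)^{1/n}, one has (x_1 + ⋯ + x_n)/n ≥ x + (1/(2n)) ∑_{i=1}^n (x_i − x)²/(x_i + x), where each summand with x_i + x = 0 is interpreted as 0. -/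
open Finset Real

theorem quantitative_amgm_normalized (n : ℕ) (hn : 1 ≤ n) (x : Fin n → ℝ) (hx : ∀ i, 0 ≤ x i) :
    (∑ i, x i) / n ≥
      (∏ i, x i) ^ ((1 : ℝ) / n) +
        (1 / (2 * n)) *
          ∑ i, (x i - (∏ i, x i) ^ ((1 : ℝ) / n)) ^ 2 / (x i + (∏ i, x i) ^ ((1 : ℝ) / n)) := by
  have hn' : (0:ℝ) < n := by exact_mod_cast Nat.pos_of_ne_zero (by omega)
  have hne : (n:ℝ) ≠ 0 := hn'.ne'
  have hP : 0 ≤ ∏ i, x i := Finset.prod_nonneg fun i _ => hx i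
  set G : ℝ := (∏ i, x i) ^ ((1 : ℝ) / n) with hGdef
  have hG0 : 0 ≤ G := Real.rpow_nonneg hP _
  set S : ℝ := ∑ i, x i with hSdef
  set Sq : ℝ := ∑ i, Real.sqrt (x i) with hSqdef
  -- AM-GM on square roots
  have hw : ∑ _i : Fin n, (1/(n:ℝ)) = 1 := by
    simp [Finset.sum_const, Finset.card_univ]
    field_simp
  have amgm := Real.geom_mean_le_arith_mean_weighted Finset.univ (fun _ => 1/(n:ℝ))
    (fun i => Real.sqrt (x i)) (fun i _ => by positivity) hw (fun i _ => Real.sqrt_nonneg _)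
  have hL : (∏ i, Real.sqrt (x i) ^ ((1:ℝ)/n)) = Real.sqrt G := by
    rw [hGdef]
    simp only [Real.sqrt_eq_rpow]
    rw [Real.finset_prod_rpow _ _ (fun i _ => Real.rpow_nonneg (hx i) _),
      Real.finset_prod_rpow _ _ (fun i _ => hx i),
      ← Real.rpow_mul hP, ← Real.rpow_mul hP]
    ring_nf
  have hSq : (n:ℝ) * Real.sqrt G ≤ Sq := by
    rw [hL, ← Finset.mul_sum, ← hSqdef] at amgm
    have h := mul_le_mul_of_nonneg_left amgm hn'.le
    have h2 : (n:ℝ) * (1/(n:ℝ) * Sq) = Sq := by field_simp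
    linarith
  have hGS : (n:ℝ) * G ≤ Real.sqrt G * Sq := by
    nlinarith [mul_le_mul_of_nonneg_left hSq (Real.sqrt_nonneg G), Real.sq_sqrt hG0]
  -- pointwise bound
  have hpt : ∀ i, (x i - G)^2 / (x i + G) ≤ 2 * (Real.sqrt (x i) - Real.sqrt G)^2 := by
    intro i
    rcases (eq_or_lt_of_le (add_nonneg (hx i) hG0)) with h | h
    · rw [← h, div_zero]; positivity
    · rw [div_le_iff₀ h]
      nlinarith [Real.sq_sqrt (hx i), Real.sq_sqrt hG0,
        sq_nonneg ((Real.sqrt (x i) - Real.sqrt G)^2),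
        Real.sqrt_nonneg (x i), Real.sqrt_nonneg G]
  have hT : (∑ i, (x i - G)^2 / (x i + G)) ≤ 2*S - 4*Real.sqrt G*Sq + 2*n*G := by
    calc (∑ i, (x i - G)^2 / (x i + G)) ≤ ∑ i, 2 * (Real.sqrt (x i) - Real.sqrt G)^2 :=
          Finset.sum_le_sum fun i _ => hpt i
      _ = 2*S - 4*Real.sqrt G*Sq + 2*n*G := by
          have e : ∀ i ∈ Finset.univ, 2 * (Real.sqrt (x i) - Real.sqrt G)^2
              = 2 * x i - 4*Real.sqrt G*Real.sqrt (x i) + 2*G := by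
            intro i _
            have h1 := Real.sq_sqrt (hx i)
            have h2 := Real.sq_sqrt hG0
            linear_combination 2*h1 + 2*h2
          rw [Finset.sum_congr rfl e]
          rw [Finset.sum_add_distrib, Finset.sum_sub_distrib, ← Finset.mul_sum, ← hSdef]
          have : (∑ i, 4*Real.sqrt G*Real.sqrt (x i)) = 4*Real.sqrt G*Sq := by
            rw [Finset.mul_sum]
          rw [this, Finset.sum_const, Finset.card_univ, Fintype.card_fin, nsmul_eq_mul]
          ring
  rw [ge_iff_le, le_div_iff₀ hn']
  have e2 : (G + 1/(2*(n:ℝ)) * (∑ i, (x i - G)^2 / (x i + G))) * n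
      = G*n + (∑ i, (x i - G)^2 / (x i + G))/2 := by
    field_simp
  rw [e2]
  nlinarith [hT, hGS]
end

section
/- For any nonnegative real numbers x_1, ..., x_n, one has (x_1 + ⋯ + x_n)/n ≥ (x_1 x_2 ⋯ x_n)^{1/n} + (1/(n(n−1))) ∑_{1 ≤ i < j ≤ n} (√x_i − √x_j)². -/
/-!
Expanding `(√xᵢ - √xⱼ)² = xᵢ + xⱼ - 2√(xᵢxⱼ)` over the `n(n-1)/2` pairs `i < j` reduces the
inequality to AM–GM for the pairwise geometric means `√(xᵢxⱼ)`: each `xᵢ` occurs in `n - 1` pairs,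
so their product is `(∏ xᵢ)^((n-1)/2)` and their geometric mean is exactly `(∏ xᵢ)^(1/n)`.
-/

open Finset Real

namespace Fin

@[to_additive]
theorem prod_prod_Ioi_mul {M : Type*} [CommMonoid M] {n : ℕ} (f : Fin n → M) :
    ∏ i, ∏ j ∈ Ioi i, (f i * f j) = (∏ i, f i) ^ (n - 1) := by
  simp only [prod_mul_distrib, Finset.prod_const]
  rw [prod_comm' (t' := univ) (s' := Iio) (by simp), ← prod_mul_distrib, ← prod_pow]
  refine prod_congr rfl fun i _ => ?_
  rw [Finset.prod_const, ← pow_add, card_Ioi, card_Iio]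
  congr 1
  omega

theorem two_mul_card_sigma_Ioi (n : ℕ) :
    2 * #(univ.sigma fun i : Fin n => Ioi i) = n * (n - 1) := by
  have h := sum_sum_Ioi_add fun _ : Fin n => 1
  rw [card_sigma, mul_sum, mul_comm n]
  simpa [mul_comm] using h

end Fin

theorem Real.geom_mean_le_mean_sqrt_mul_pairs {n : ℕ} (hn : 2 ≤ n) {x : Fin n → ℝ}
    (hx : ∀ i, 0 ≤ x i) :
    (∏ i, x i) ^ ((1 : ℝ) / n) ≤ 2 / (n * (n - 1)) * ∑ i, ∑ j ∈ Ioi i, √(x i * x j) := by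
  set S := univ.sigma fun i : Fin n => Ioi i
  have hn' : (2 : ℝ) ≤ n := by exact_mod_cast hn
  have hcast : ((n - 1 : ℕ) : ℝ) = n - 1 := by rw [Nat.cast_sub (by omega), Nat.cast_one]
  have hS : (#S : ℝ) = n * (n - 1) / 2 := by
    have := congrArg (Nat.cast (R := ℝ)) (Fin.two_mul_card_sigma_Ioi n)
    push_cast [hcast] at this
    linarith
  have hP : 0 ≤ ∏ i, x i := prod_nonneg fun i _ => hx i
  have amgm := geom_mean_le_arith_mean S (fun _ => 1) (fun p => √(x p.1 * x p.2))
    (fun _ _ => zero_le_one) (by simp only [sum_const, nsmul_one, hS]; nlinarith)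
    (fun _ _ => sqrt_nonneg _)
  simp only [rpow_one, one_mul, sum_const, nsmul_one] at amgm
  have hprod : ∏ p ∈ S, √(x p.1 * x p.2) = √((∏ i, x i) ^ (n - 1)) := by
    rw [← sqrt_prod _ fun p _ => mul_nonneg (hx _) (hx _), prod_sigma, Fin.prod_prod_Ioi_mul]
  rw [hprod, sum_sigma, sqrt_eq_rpow, ← rpow_natCast, ← rpow_mul hP, ← rpow_mul hP, hS,
    hcast] at amgm
  convert amgm using 1
  · have : (n : ℝ) - 1 ≠ 0 := by linarith
    field_simp
  · field_simp

theorem Real.sum_sum_Ioi_sq_sqrt_sub {n : ℕ} {x : Fin n → ℝ} (hx : ∀ i, 0 ≤ x i) :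
    ∑ i, ∑ j ∈ Ioi i, (√(x i) - √(x j)) ^ 2 =
      (n - 1) • ∑ i, x i - 2 * ∑ i, ∑ j ∈ Ioi i, √(x i * x j) := by
  have hsq (i j : Fin n) : (√(x i) - √(x j)) ^ 2 = (x i + x j) - 2 * √(x i * x j) := by
    rw [sub_sq, sq_sqrt (hx i), sq_sqrt (hx j), sqrt_mul (hx i)]
    ring
  simp_rw [hsq, sum_sub_distrib, ← mul_sum, Fin.sum_sum_Ioi_add]

theorem quantitative_amgm_pairwise (n : ℕ) (hn : 2 ≤ n) (x : Fin n → ℝ) (hx : ∀ i, 0 ≤ x i) :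
    (∑ i, x i) / n ≥
      (∏ i, x i) ^ ((1 : ℝ) / n) +
        (1 / (n * (n - 1) : ℝ)) *
          ∑ i, ∑ j ∈ Finset.Ioi i, (Real.sqrt (x i) - Real.sqrt (x j)) ^ 2 := by
  have hn' : (2 : ℝ) ≤ n := by exact_mod_cast hn
  have hcast : ((n - 1 : ℕ) : ℝ) = n - 1 := by rw [Nat.cast_sub (by omega), Nat.cast_one]
  rw [Real.sum_sum_Ioi_sq_sqrt_sub hx, nsmul_eq_mul, hcast]
  have amgm := Real.geom_mean_le_mean_sqrt_mul_pairs hn hx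
  set T := ∑ i, ∑ j ∈ Ioi i, √(x i * x j)
  have hsplit : 1 / (n * (n - 1) : ℝ) * ((n - 1) * ∑ i, x i - 2 * T) =
      (∑ i, x i) / n - 2 / (n * (n - 1)) * T := by
    have : (n : ℝ) - 1 ≠ 0 := by linarith
    field_simp
  linarith
end

section
/- For n ≥ 3 and nonnegative reals x_1, ..., x_n, equality holds in (x_1 + ⋯ + x_n)/n = (x_1⋯x_n)^{1/n} + (1/(n(n−1))) ∑_{i<j} (√x_i − √x_j)² if and only if all but one of the x_i are zero, or all the x_i are equal. -/
/-!
Write `x i = s i ^ 2` with `s i ≥ 0`. The identity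
`∑_{i<j} (s i - s j)^2 = (n - 1) ∑ s i^2 - 2 ∑_{i<j} s i s j` turns the equation into
"the geometric mean of the `x i` equals the arithmetic mean of the `n(n-1)/2` products `s i s j`".
Every index lies in `n - 1` pairs, so the geometric mean of those products is again the geometric
mean of the `x i`: we are in the equality case of AM-GM for the products, i.e. all `s i s j`
with `i ≠ j` coincide. Using a third index `c`, either some product vanishes, and then at most one
`s i` is nonzero, or `s a s c = s b s c` with `s c ≠ 0` gives `s a = s b`.
-/

open Finset

section PairSums

variable {α M : Type*} [LinearOrder α] [Fintype α] [LocallyFiniteOrderTop α]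
  [LocallyFiniteOrderBot α]

@[to_additive]
theorem prod_prod_Ioi_mul_eq_prod_pow [CommMonoid M] (g : α → M) :
    ∏ i, ∏ j ∈ Ioi i, g i * g j = ∏ i, g i ^ (Fintype.card α - 1) := by
  rw [prod_prod_Ioi_mul_eq_prod_prod_off_diag (fun _ j => g j)]
  simp only [prod_const, card_compl, card_singleton]

theorem two_mul_card_sigma_Ioi :
    2 * #(univ.sigma fun i : α => Ioi i) = Fintype.card α * (Fintype.card α - 1) := by
  have := sum_sum_Ioi_add_eq_sum_nsmul (α := α) fun _ => 1
  simp only [sum_const, smul_eq_mul, mul_one, card_univ] at this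
  rw [card_sigma, mul_sum, ← this]
  simp only [one_add_one_eq_two, mul_comm]

theorem sum_sum_Ioi_sub_sq [CommRing M] (s : α → M) :
    ∑ i, ∑ j ∈ Ioi i, (s i - s j) ^ 2 =
      (Fintype.card α - 1) • ∑ i, s i ^ 2 - 2 * ∑ i, ∑ j ∈ Ioi i, s i * s j := by
  have hsq : ∀ i j, (s i - s j) ^ 2 = (s i ^ 2 + s j ^ 2) - 2 * (s i * s j) := fun i j => by ring
  simp only [hsq, sum_sub_distrib, sum_sum_Ioi_add_eq_sum_nsmul, ← smul_sum, mul_sum]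

theorem prod_prod_Ioi_mul_rpow_eq_prod_sq_rpow [Nontrivial α] {s : α → ℝ}
    (hs : ∀ i, 0 ≤ s i) :
    ∏ i, ∏ j ∈ Ioi i, (s i * s j) ^ (2 / (Fintype.card α * (Fintype.card α - 1)) : ℝ) =
      (∏ i, s i ^ 2) ^ ((1 : ℝ) / Fintype.card α) := by
  have hN1 : (1 : ℝ) < Fintype.card α := by exact_mod_cast Fintype.one_lt_card
  have hN1' : (Fintype.card α : ℝ) - 1 ≠ 0 := by linarith
  have hmul : ∀ i j, 0 ≤ s i * s j := fun i j => mul_nonneg (hs i) (hs j)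
  have hs' : 0 ≤ ∏ i, s i := prod_nonneg fun i _ => hs i
  rw [prod_congr rfl fun i _ => Real.finsetProd_rpow _ _ (fun j _ => hmul i j) _,
    Real.finsetProd_rpow _ _ (fun i _ => prod_nonneg fun j _ => hmul i j),
    prod_prod_Ioi_mul_eq_prod_pow, prod_pow, prod_pow, ← Real.rpow_natCast, ← Real.rpow_natCast,
    ← Real.rpow_mul hs', ← Real.rpow_mul hs', Nat.cast_pred Fintype.card_pos]
  congr 1
  field_simp
  norm_num

theorem geom_mean_sq_eq_arith_mean_pairwise_mul_iff [Nontrivial α] {s : α → ℝ}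
    (hs : ∀ i, 0 ≤ s i) :
    (∏ i, s i ^ 2) ^ ((1 : ℝ) / Fintype.card α) =
        2 / (Fintype.card α * (Fintype.card α - 1)) * ∑ i, ∑ j ∈ Ioi i, s i * s j ↔
      ∀ i j k l, i ≠ j → k ≠ l → s i * s j = s k * s l := by
  set P := univ.sigma fun i : α => Ioi i with hP
  set w : ℝ := 2 / (Fintype.card α * (Fintype.card α - 1)) with hw
  have hN1 : (1 : ℝ) < Fintype.card α := by exact_mod_cast Fintype.one_lt_card
  have hw0 : 0 < w := div_pos two_pos (mul_pos (by linarith) (by linarith))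
  set z : (Σ _ : α, α) → ℝ := fun p => s p.1 * s p.2
  have hw1 : ∑ _p ∈ P, w = 1 := by
    have hP2 : 2 * (#P : ℝ) = Fintype.card α * (Fintype.card α - 1) := by
      rw [← Nat.cast_pred Fintype.card_pos]; exact_mod_cast two_mul_card_sigma_Ioi
    have hN1' : (Fintype.card α : ℝ) - 1 ≠ 0 := by linarith
    rw [sum_const, nsmul_eq_mul, hw]
    field_simp
    linarith
  have hGM : ∏ p ∈ P, z p ^ w = (∏ i, s i ^ 2) ^ ((1 : ℝ) / Fintype.card α) := by
    rw [hP, prod_sigma, ← prod_prod_Ioi_mul_rpow_eq_prod_sq_rpow hs]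
  have hAM : ∑ p ∈ P, w * z p = w * ∑ i, ∑ j ∈ Ioi i, s i * s j := by
    simp only [hP, sum_sigma, mul_sum, z]
  have hpair : ∀ i j, i ≠ j → ∃ p ∈ P, s i * s j = z p := fun i j hij => by
    rcases hij.lt_or_gt with h | h
    · exact ⟨⟨i, j⟩, by simpa [P] using h, rfl⟩
    · exact ⟨⟨j, i⟩, by simpa [P] using h, mul_comm _ _⟩
  rw [← hGM, ← hAM, Real.geom_mean_eq_arith_mean_weighted_iff_of_pos P _ z
    (fun _ _ => hw0) hw1 (fun p _ => mul_nonneg (hs _) (hs _))]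
  constructor
  · intro h i j k l hij hkl
    obtain ⟨p, hp, hijp⟩ := hpair i j hij
    obtain ⟨q, hq, hklq⟩ := hpair k l hkl
    rw [hijp, hklq, h p hp q hq]
  · intro h p hp q hq
    simp only [P, mem_sigma, mem_univ, mem_Ioi, true_and] at hp hq
    exact h _ _ _ _ hp.ne hq.ne

end PairSums

theorem forall_mul_eq_mul_of_ne_iff {α M : Type*} [CommMonoidWithZero M] [IsCancelMulZero M]
    (hα : 3 ≤ ENat.card α) (s : α → M) :
    (∀ i j k l, i ≠ j → k ≠ l → s i * s j = s k * s l) ↔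
      (∃ i, ∀ j, j ≠ i → s j = 0) ∨ ∀ i j, s i = s j := by
  constructor
  · intro h
    by_cases! hzero : ∃ k, s k = 0
    · left
      obtain ⟨k, hk⟩ := hzero
      obtain ⟨k', hk', -⟩ := ENat.exists_ne_ne_of_three_le hα k k
      have hmul : ∀ i j, i ≠ j → s i * s j = 0 := fun i j hij => by
        rw [h i j k k' hij hk'.symm, hk, zero_mul]
      by_cases! hall : ∀ j, s j = 0
      · exact ⟨k, fun j _ => hall j⟩
      · obtain ⟨m, hm⟩ := hall
        exact ⟨m, fun j hj => (mul_eq_zero.mp (hmul j m hj)).resolve_right hm⟩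
    · right
      intro a b
      obtain ⟨c, hca, hcb⟩ := ENat.exists_ne_ne_of_three_le hα a b
      exact mul_right_cancel₀ (hzero c) (h a c b c hca.symm hcb.symm)
  · rintro (⟨i, hi⟩ | hall) a b c d hab hcd
    · have hz : ∀ a b, a ≠ b → s a * s b = 0 := fun a b hab => by
        rcases eq_or_ne a i with rfl | ha
        · rw [hi b hab.symm, mul_zero]
        · rw [hi a ha, zero_mul]
      rw [hz a b hab, hz c d hcd]
    · rw [hall a c, hall b d]

theorem quantitative_amgm_pairwise_equality (n : ℕ) (hn : 3 ≤ n) (x : Fin n → ℝ)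
    (hx : ∀ i, 0 ≤ x i) :
    (∑ i, x i) / n =
      (∏ i, x i) ^ ((1 : ℝ) / n) +
        (1 / (n * (n - 1) : ℝ)) *
          ∑ i, ∑ j ∈ Finset.Ioi i, (Real.sqrt (x i) - Real.sqrt (x j)) ^ 2 ↔
      (∃ i, ∀ j, j ≠ i → x j = 0) ∨ (∀ i j, x i = x j) := by
  obtain ⟨s, hs, rfl⟩ : ∃ s : Fin n → ℝ, (∀ i, 0 ≤ s i) ∧ x = fun i => s i ^ 2 :=
    ⟨fun i => √(x i), fun i => Real.sqrt_nonneg _, funext fun i => (Real.sq_sqrt (hx i)).symm⟩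
  have : Nontrivial (Fin n) := Fin.nontrivial_iff_two_le.mpr (by omega)
  have hn1 : (n : ℝ) - 1 ≠ 0 := by
    have : (3 : ℝ) ≤ n := by exact_mod_cast hn
    linarith
  have hsplit : 1 / (n * (n - 1) : ℝ) * ∑ i, ∑ j ∈ Ioi i, (s i - s j) ^ 2 =
      (∑ i, s i ^ 2) / n - 2 / (n * (n - 1)) * ∑ i, ∑ j ∈ Ioi i, s i * s j := by
    rw [sum_sum_Ioi_sub_sq, nsmul_eq_mul, Fintype.card_fin, Nat.cast_sub (by omega)]
    field_simp
    ring
  have hamgm := geom_mean_sq_eq_arith_mean_pairwise_mul_iff hs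
  rw [Fintype.card_fin] at hamgm
  simp only [Real.sqrt_sq (hs _), hsplit, pow_eq_zero_iff two_ne_zero,
    sq_eq_sq₀ (hs _) (hs _)]
  rw [← forall_mul_eq_mul_of_ne_iff (by simpa using hn) s, ← hamgm]
  constructor <;> intro h <;> linarith
end

section
/- For any real numbers x_1, ..., x_n in the interval [0, 1/2], one has ∑_{i=1}^n √(x_i/(1+x_i)) ≥ n √(x/(1+x)), where x = (x_1 x_2 ⋯ x_n)^{1/n} is the geometric mean. -/
/-!
Writing `x = exp u`, the map `x ↦ (x / (1 + x)) ^ p` becomes `g u = (1 + exp (-u)) ^ (-p)` and the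
geometric mean of the `x i` becomes the arithmetic mean of the `u i`, so the inequality is Jensen's
inequality for `g`. This applies on `x ≤ p`, i.e. `u ≤ log p`, where
`g'' u = p e^{-u} (1 + e^{-u})^{-p-2} (p e^{-u} - 1)` is nonnegative.
-/

open Real Finset

lemma hasDerivAt_one_add_exp_neg_rpow_neg (q u : ℝ) :
    HasDerivAt (fun v => (1 + exp (-v)) ^ (-q))
      (q * exp (-u) * (1 + exp (-u)) ^ (-(q + 1))) u := by
  have h : HasDerivAt (fun v => 1 + exp (-v)) (-exp (-u)) u := by
    simpa using ((hasDerivAt_neg u).exp).const_add 1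
  convert h.rpow_const (p := -q) (Or.inl (by positivity)) using 1
  rw [neg_add']
  ring

lemma convexOn_one_add_exp_neg_rpow_neg {p : ℝ} (hp : 0 < p) :
    ConvexOn ℝ (Set.Iic (log p)) (fun u => (1 + exp (-u)) ^ (-p)) := by
  refine convexOn_of_hasDerivWithinAt2_nonneg (convex_Iic _)
    (f' := fun u => p * exp (-u) * (1 + exp (-u)) ^ (-(p + 1)))
    (f'' := fun u => p * exp (-u) * (1 + exp (-u)) ^ (-(p + 2)) * (p * exp (-u) - 1))
    (fun u _ => (hasDerivAt_one_add_exp_neg_rpow_neg p u).continuousAt.continuousWithinAt)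
    (fun u _ => (hasDerivAt_one_add_exp_neg_rpow_neg p u).hasDerivWithinAt)
    (fun u _ => ?_) (fun u hu => ?_)
  · have h := ((hasDerivAt_neg u).exp.const_mul p).mul
      (hasDerivAt_one_add_exp_neg_rpow_neg (p + 1) u)
    have hA : (1 + exp (-u)) ^ (-(p + 1)) = (1 + exp (-u)) ^ (-(p + 2)) * (1 + exp (-u)) := by
      rw [← rpow_add_one (by positivity)]; ring_nf
    rw [add_assoc, one_add_one_eq_two, hA] at h
    exact (h.congr_deriv (by ring)).hasDerivWithinAt
  · rw [interior_Iic, Set.mem_Iio] at hu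
    have : 1 ≤ p * exp (-u) := by
      rw [← exp_log hp, ← exp_add]; exact one_le_exp (by linarith)
    have : 0 ≤ p * exp (-u) - 1 := by linarith
    positivity

lemma one_add_exp_neg_log_rpow_neg {x : ℝ} (hx : 0 < x) (p : ℝ) :
    (1 + exp (-log x)) ^ (-p) = (x / (1 + x)) ^ p := by
  have h : 1 + exp (-log x) = (x / (1 + x))⁻¹ := by
    rw [exp_neg, exp_log hx]; field_simp; ring
  rw [h, rpow_neg (by positivity), inv_rpow (by positivity), inv_inv]

theorem geom_mean_div_one_add_rpow_le_weighted {ι : Type*} (s : Finset ι) (w x : ι → ℝ)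
    {p : ℝ} (hp : 0 < p) (hw : ∀ i ∈ s, 0 ≤ w i) (hw₁ : ∑ i ∈ s, w i = 1)
    (hx : ∀ i ∈ s, x i ∈ Set.Ioc 0 p) :
    ((∏ i ∈ s, x i ^ w i) / (1 + ∏ i ∈ s, x i ^ w i)) ^ p ≤
      ∑ i ∈ s, w i * (x i / (1 + x i)) ^ p := by
  have hG : 0 < ∏ i ∈ s, x i ^ w i := prod_pos fun i hi => rpow_pos_of_pos (hx i hi).1 _
  have hlogG : log (∏ i ∈ s, x i ^ w i) = ∑ i ∈ s, w i • log (x i) := by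
    rw [log_prod fun i hi => (rpow_pos_of_pos (hx i hi).1 _).ne']
    exact sum_congr rfl fun i hi => log_rpow (hx i hi).1 _
  calc ((∏ i ∈ s, x i ^ w i) / (1 + ∏ i ∈ s, x i ^ w i)) ^ p
      = (1 + exp (-log (∏ i ∈ s, x i ^ w i))) ^ (-p) := (one_add_exp_neg_log_rpow_neg hG p).symm
    _ ≤ ∑ i ∈ s, w i • (1 + exp (-log (x i))) ^ (-p) := by
      rw [hlogG]
      exact (convexOn_one_add_exp_neg_rpow_neg hp).map_sum_le hw hw₁
        fun i hi => log_le_log (hx i hi).1 (hx i hi).2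
    _ = ∑ i ∈ s, w i * (x i / (1 + x i)) ^ p :=
      sum_congr rfl fun i hi => by rw [one_add_exp_neg_log_rpow_neg (hx i hi).1, smul_eq_mul]

theorem sqrt_ratio_geometric_mean (n : ℕ) (hn : 1 ≤ n) (x : Fin n → ℝ)
    (hx : ∀ i, x i ∈ Set.Icc (0 : ℝ) (1 / 2)) :
    ∑ i, Real.sqrt (x i / (1 + x i)) ≥
      n * Real.sqrt ((∏ i, x i) ^ ((1 : ℝ) / n) / (1 + (∏ i, x i) ^ ((1 : ℝ) / n))) := by
  rcases em (∃ i, x i = 0) with ⟨i, hi⟩ | hpos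
  · rw [prod_eq_zero (mem_univ i) hi, zero_rpow (by positivity)]
    simpa using sum_nonneg fun i _ => sqrt_nonneg (x i / (1 + x i))
  push Not at hpos
  have hn' : (0 : ℝ) < n := by exact_mod_cast hn
  have hmean := geom_mean_div_one_add_rpow_le_weighted univ (fun _ => (1 : ℝ) / n) x
    (by norm_num : (0 : ℝ) < 1 / 2) (fun _ _ => by positivity)
    (by simp [hn'.ne'])
    fun i _ => ⟨(hx i).1.lt_of_ne' (hpos i), (hx i).2⟩
  rw [finsetProd_rpow _ _ fun i _ => (hx i).1, ← mul_sum, one_div_mul_eq_div] at hmean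
  simp only [sqrt_eq_rpow]
  rw [ge_iff_le, ← le_div_iff₀' hn']
  exact hmean
end

section
/- Let α_1, α_2 ∈ [0, α] with 0 ≤ α < π/2 and tan α ≤ 1/√2. Then 2 cos²((α_1 + α_2)/2) ≥ (sin α_1 + sin α_2)². -/
/-!
With `s = (α₁ + α₂) / 2`, the sum-to-product formula gives `sin α₁ + sin α₂ ≤ 2 sin s` in absolute
value, so it suffices that `2 sin² s ≤ cos² s`, i.e. `tan² s ≤ 1 / 2`. This holds because
`0 ≤ s ≤ α < π / 2` and `tan` is monotone there, so `0 ≤ tan s ≤ tan α ≤ 1 / √2`.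
-/

open Real

theorem sin_add_sin_sq_le (x y : ℝ) : (sin x + sin y) ^ 2 ≤ 4 * sin ((x + y) / 2) ^ 2 := by
  rw [sin_add_sin]
  calc (2 * sin ((x + y) / 2) * cos ((x - y) / 2)) ^ 2
      = 4 * sin ((x + y) / 2) ^ 2 * cos ((x - y) / 2) ^ 2 := by ring
    _ ≤ 4 * sin ((x + y) / 2) ^ 2 := mul_le_of_le_one_right (by positivity) (cos_sq_le_one _)

theorem sin_sq_le_mul_cos_sq_of_tan_sq_le {x c : ℝ} (hcos : cos x ≠ 0) (h : tan x ^ 2 ≤ c) :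
    sin x ^ 2 ≤ c * cos x ^ 2 := by
  rw [← tan_mul_cos hcos, mul_pow]
  exact mul_le_mul_of_nonneg_right h (sq_nonneg _)

theorem tan_le_tan_of_nonneg_of_le {x y : ℝ} (hx : 0 ≤ x) (hxy : x ≤ y) (hy : y < π / 2) :
    tan x ≤ tan y :=
  strictMonoOn_tan.monotoneOn ⟨by linarith [pi_pos], by linarith⟩
    ⟨by linarith [pi_pos], hy⟩ hxy

theorem trig_inequality_general (α α₁ α₂ : ℝ) (hα : α < Real.pi / 2)
    (htan : Real.tan α ≤ 1 / Real.sqrt 2)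
    (h₁ : α₁ ∈ Set.Icc 0 α) (h₂ : α₂ ∈ Set.Icc 0 α) :
    2 * Real.cos ((α₁ + α₂) / 2) ^ 2 ≥ (Real.sin α₁ + Real.sin α₂) ^ 2 := by
  have hs0 : 0 ≤ (α₁ + α₂) / 2 := by linarith [h₁.1, h₂.1]
  have hsα : (α₁ + α₂) / 2 ≤ α := by linarith [h₁.2, h₂.2]
  set s := (α₁ + α₂) / 2
  have htan_sq : tan s ^ 2 ≤ 1 / 2 :=
    calc tan s ^ 2 ≤ (1 / √2) ^ 2 :=
          pow_le_pow_left₀ (tan_nonneg_of_nonneg_of_le_pi_div_two hs0 (by linarith))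
            ((tan_le_tan_of_nonneg_of_le hs0 hsα hα).trans htan) 2
      _ = 1 / 2 := by rw [div_pow, sq_sqrt zero_le_two, one_pow]
  have hcos : cos s ≠ 0 := (cos_pos_of_mem_Ioo ⟨by linarith [pi_pos], by linarith⟩).ne'
  calc (sin α₁ + sin α₂) ^ 2 ≤ 4 * sin s ^ 2 := sin_add_sin_sq_le α₁ α₂
    _ ≤ 4 * (1 / 2 * cos s ^ 2) := by gcongr; exact sin_sq_le_mul_cos_sq_of_tan_sq_le hcos htan_sq
    _ = 2 * cos s ^ 2 := by ring

theorem trig_inequality (α α₁ α₂ : ℝ) (hα0 : 0 ≤ α) (hα : α < Real.pi / 2)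
    (htan : Real.tan α ≤ 1 / Real.sqrt 2)
    (h₁ : α₁ ∈ Set.Icc 0 α) (h₂ : α₂ ∈ Set.Icc 0 α) :
    2 * Real.cos ((α₁ + α₂) / 2) ^ 2 ≥ (Real.sin α₁ + Real.sin α₂) ^ 2 :=
  trig_inequality_general α α₁ α₂ hα htan h₁ h₂
end

section
/- For nonnegative λ_1, ..., λ_n and μ > 0 with ∏_{i=1}^n λ_i = μⁿ, and any ε > 0 with ελ_i ≤ 1/2 for all i, one has (1 + εμ)/ (∏_{i=1}^n (1 + ελ_i))^{1/n} ≤ 1 − (1/n) ∑_{i=1}^n ( √(ελ_i/(1+ελ_i)) − √(εμ/(1+εμ)) )². -/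
/-!
Write `tᵢ = ε λᵢ` and `τ = ε μ`, so that `τ` is the geometric mean of the `tᵢ`, and let `G` be the
geometric mean of the `1 + tᵢ`. On the left, `(1 + τ) / G = 1 / G + τ / G`: AM–GM for the numbers
`1 / (1 + tᵢ)` bounds `1 / G` by their mean, and Mahler's inequality `1 + τ ≤ G` bounds `τ / G` by
`τ / (1 + τ)`. Expanding the squares on the right, what remains is that the mean of
`√(tᵢ / (1 + tᵢ))` is at least `√(τ / (1 + τ))`: Jensen's inequality for `u ↦ √(u / (1 + u))`,
which is convex in the variable `log u` as long as `u ≤ 1 / 2`.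
-/

open Real Finset

lemma hasDerivAt_inv_sqrt_one_add_exp_neg (x : ℝ) :
    HasDerivAt (fun v => (√(1 + exp (-v)))⁻¹)
      (exp (-x) / (2 * (1 + exp (-x)) * √(1 + exp (-x)))) x := by
  have hA : 0 < 1 + exp (-x) := by positivity
  have hS : 0 < √(1 + exp (-x)) := sqrt_pos.2 hA
  refine (((hasDerivAt_neg x).exp.const_add 1).sqrt hA.ne').inv hS.ne' |>.congr_deriv ?_
  field_simp
  rw [sq_sqrt hA.le]

lemma hasDerivAt_exp_neg_div (x : ℝ) :
    HasDerivAt (fun v => exp (-v) / (2 * (1 + exp (-v)) * √(1 + exp (-v))))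
      (exp (-x) * (exp (-x) - 2) / (4 * (1 + exp (-x)) ^ 2 * √(1 + exp (-x)))) x := by
  have hA : 0 < 1 + exp (-x) := by positivity
  have hS : 0 < √(1 + exp (-x)) := sqrt_pos.2 hA
  have hE := (hasDerivAt_neg x).exp
  refine (hE.div (((hE.const_add 1).const_mul 2).mul ((hE.const_add 1).sqrt hA.ne'))
    (by simp only [Pi.mul_apply]; positivity)).congr_deriv ?_
  simp only [Pi.mul_apply]
  field_simp
  rw [sq_sqrt hA.le]
  ring

/-- In the variable `v = log u` this is `u ↦ √(u / (1 + u))`; its second derivative has the sign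
of `exp (-v) - 2`. -/
lemma convexOn_inv_sqrt_one_add_exp_neg :
    ConvexOn ℝ (Set.Iic (-log 2)) fun v => (√(1 + exp (-v)))⁻¹ := by
  refine convexOn_of_hasDerivWithinAt2_nonneg (convex_Iic _)
    (fun x _ => (hasDerivAt_inv_sqrt_one_add_exp_neg x).continuousAt.continuousWithinAt)
    (fun x _ => (hasDerivAt_inv_sqrt_one_add_exp_neg x).hasDerivWithinAt)
    (fun x _ => (hasDerivAt_exp_neg_div x).hasDerivWithinAt) fun x hx => ?_
  rw [interior_Iic, Set.mem_Iio] at hx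
  have h2 : 2 < exp (-x) := (log_lt_iff_lt_exp two_pos).1 (by linarith)
  have : 0 ≤ exp (-x) - 2 := by linarith
  positivity

lemma inv_sqrt_one_add_exp_neg_log {u : ℝ} (hu : 0 < u) :
    (√(1 + exp (-log u)))⁻¹ = √(u / (1 + u)) := by
  rw [exp_neg, exp_log hu, ← sqrt_inv]
  congr 1
  field_simp
  ring

section Means

variable {ι : Type*} [Fintype ι]

lemma sum_sub_sq_le_sum_sq_sub (x : ι → ℝ) {c : ℝ} (hc : 0 ≤ c)
    (h : Fintype.card ι * c ≤ ∑ i, x i) :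
    ∑ i, (x i - c) ^ 2 ≤ ∑ i, x i ^ 2 - Fintype.card ι * c ^ 2 := by
  have hexpand :
      ∑ i, (x i - c) ^ 2 = ∑ i, x i ^ 2 - 2 * (∑ i, x i) * c + Fintype.card ι * c ^ 2 := by
    simp only [sub_sq, sum_add_distrib, sum_sub_distrib, sum_const, card_univ, nsmul_eq_mul,
      ← sum_mul, ← mul_sum]
  nlinarith

lemma sum_inv_one_add_add_sum_div_one_add {t : ι → ℝ} (ht : ∀ i, 0 ≤ t i) :
    ∑ i, (1 + t i)⁻¹ + ∑ i, t i / (1 + t i) = Fintype.card ι := by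
  have h (i : ι) : (1 + t i)⁻¹ + t i / (1 + t i) = 1 := by
    field_simp [(by linarith [ht i] : 1 + t i ≠ 0)]
  simp [← sum_add_distrib, h]

variable [Nonempty ι]

lemma geom_mean_le_arith_mean_uniform {z : ι → ℝ} (hz : ∀ i, 0 ≤ z i) :
    (∏ i, z i) ^ (Fintype.card ι : ℝ)⁻¹ ≤ (∑ i, z i) / Fintype.card ι := by
  simpa using Real.geom_mean_le_arith_mean univ (fun _ => 1) z (fun _ _ => zero_le_one)
    (by simp [Fintype.card_pos]) fun i _ => hz i

lemma inv_geom_mean_le_arith_mean_inv {a : ι → ℝ} (ha : ∀ i, 0 < a i) :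
    ((∏ i, a i) ^ (Fintype.card ι : ℝ)⁻¹)⁻¹ ≤ (∑ i, (a i)⁻¹) / Fintype.card ι := by
  rw [← inv_rpow (prod_nonneg fun i _ => (ha i).le), ← prod_inv_distrib]
  exact geom_mean_le_arith_mean_uniform fun i => (inv_pos.2 (ha i)).le

/-- Mahler's inequality `(∏ aᵢ)^(1/n) + (∏ bᵢ)^(1/n) ≤ (∏ (aᵢ + bᵢ))^(1/n)` with all `aᵢ = 1`. -/
lemma one_add_le_geom_mean_one_add {t : ι → ℝ} {τ : ℝ} (ht : ∀ i, 0 ≤ t i) (hτ : 0 ≤ τ)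
    (hprod : ∏ i, t i = τ ^ Fintype.card ι) :
    1 + τ ≤ (∏ i, (1 + t i)) ^ (Fintype.card ι : ℝ)⁻¹ := by
  have hpos (i : ι) : 0 < 1 + t i := by linarith [ht i]
  set G := (∏ i, (1 + t i)) ^ (Fintype.card ι : ℝ)⁻¹
  have hG : 0 < G := rpow_pos_of_pos (prod_pos fun i _ => hpos i) _
  have hinv : G⁻¹ ≤ (∑ i, (1 + t i)⁻¹) / Fintype.card ι := inv_geom_mean_le_arith_mean_inv hpos
  have hratio : τ / G ≤ (∑ i, t i / (1 + t i)) / Fintype.card ι := by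
    have h := geom_mean_le_arith_mean_uniform fun i => div_nonneg (ht i) (hpos i).le
    rwa [prod_div_distrib, div_rpow (prod_nonneg fun i _ => ht i)
      (prod_nonneg fun i _ => (hpos i).le), hprod, pow_rpow_inv_natCast hτ Fintype.card_ne_zero] at h
  rw [← div_le_one hG]
  calc (1 + τ) / G = G⁻¹ + τ / G := by ring
    _ ≤ (∑ i, (1 + t i)⁻¹) / Fintype.card ι + (∑ i, t i / (1 + t i)) / Fintype.card ι :=
      add_le_add hinv hratio
    _ = 1 := by
      rw [← add_div, sum_inv_one_add_add_sum_div_one_add ht,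
        div_self (Nat.cast_ne_zero.2 Fintype.card_ne_zero)]

lemma sqrt_div_one_add_le_mean {t : ι → ℝ} {τ : ℝ} (ht : ∀ i, 0 < t i) (ht2 : ∀ i, t i ≤ 1 / 2)
    (hτ : 0 < τ) (hprod : ∏ i, t i = τ ^ Fintype.card ι) :
    √(τ / (1 + τ)) ≤ (∑ i, √(t i / (1 + t i))) / Fintype.card ι := by
  have hn : (Fintype.card ι : ℝ) ≠ 0 := Nat.cast_ne_zero.2 Fintype.card_ne_zero
  have hmem : ∀ i ∈ univ, log (t i) ∈ Set.Iic (-log 2) := fun i _ => by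
    simpa [log_inv] using log_le_log (ht i) (ht2 i)
  have hjensen := convexOn_inv_sqrt_one_add_exp_neg.map_sum_le
    (fun _ _ => inv_nonneg.2 (Nat.cast_nonneg (Fintype.card ι))) (by simp [hn]) hmem
  have hcenter : ∑ i, (Fintype.card ι : ℝ)⁻¹ * log (t i) = log τ := by
    rw [← mul_sum, ← log_prod (fun i _ => (ht i).ne'), hprod, log_pow, inv_mul_cancel_left₀ hn]
  simp only [smul_eq_mul, hcenter, inv_sqrt_one_add_exp_neg_log hτ,
    inv_sqrt_one_add_exp_neg_log (ht _)] at hjensen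
  rwa [← mul_sum, inv_mul_eq_div] at hjensen

lemma one_add_div_geom_mean_one_add_le {t : ι → ℝ} {τ : ℝ} (ht : ∀ i, 0 < t i)
    (ht2 : ∀ i, t i ≤ 1 / 2) (hτ : 0 < τ) (hprod : ∏ i, t i = τ ^ Fintype.card ι) :
    (1 + τ) / (∏ i, (1 + t i)) ^ (Fintype.card ι : ℝ)⁻¹ ≤
      1 - (∑ i, (√(t i / (1 + t i)) - √(τ / (1 + τ))) ^ 2) / Fintype.card ι := by
  have hn : (0 : ℝ) < Fintype.card ι := Nat.cast_pos.2 Fintype.card_pos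
  set G := (∏ i, (1 + t i)) ^ (Fintype.card ι : ℝ)⁻¹
  have hpos (i : ι) : 0 < 1 + t i := by linarith [ht i]
  have hinv : G⁻¹ ≤ (∑ i, (1 + t i)⁻¹) / Fintype.card ι := inv_geom_mean_le_arith_mean_inv hpos
  have hG : 1 + τ ≤ G := one_add_le_geom_mean_one_add (fun i => (ht i).le) hτ.le hprod
  have hvar : ∑ i, (√(t i / (1 + t i)) - √(τ / (1 + τ))) ^ 2 ≤
      ∑ i, t i / (1 + t i) - Fintype.card ι * (τ / (1 + τ)) := by
    have h := sum_sub_sq_le_sum_sq_sub _ (sqrt_nonneg _)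
      ((le_div_iff₀' hn).1 (sqrt_div_one_add_le_mean ht ht2 hτ hprod))
    have hsq (i : ι) : √(t i / (1 + t i)) ^ 2 = t i / (1 + t i) :=
      sq_sqrt (div_nonneg (ht i).le (hpos i).le)
    simpa only [hsq, sq_sqrt (by positivity : 0 ≤ τ / (1 + τ))] using h
  have hsum := sum_inv_one_add_add_sum_div_one_add fun i => (ht i).le
  calc (1 + τ) / G = G⁻¹ + τ / G := by ring
    _ ≤ (∑ i, (1 + t i)⁻¹) / Fintype.card ι + τ / (1 + τ) :=
      add_le_add hinv (div_le_div_of_nonneg_left hτ.le (by positivity) hG)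
    _ = 1 - (∑ i, t i / (1 + t i) - Fintype.card ι * (τ / (1 + τ))) / Fintype.card ι := by
      rw [eq_sub_of_add_eq hsum]
      field_simp
      ring
    _ ≤ 1 - (∑ i, (√(t i / (1 + t i)) - √(τ / (1 + τ))) ^ 2) / Fintype.card ι := by gcongr

end Means

theorem eigenvalue_product_estimate (n : ℕ) (hn : 1 ≤ n) (lam : Fin n → ℝ) (μ ε : ℝ)
    (hlam : ∀ i, 0 ≤ lam i) (hμ : 0 < μ) (hprod : ∏ i, lam i = μ ^ n)
    (hε : 0 < ε) (hsmall : ∀ i, ε * lam i ≤ 1 / 2) :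
    (1 + ε * μ) / (∏ i, (1 + ε * lam i)) ^ ((1 : ℝ) / n) ≤
      1 - (1 / n) * ∑ i,
        (Real.sqrt (ε * lam i / (1 + ε * lam i)) - Real.sqrt (ε * μ / (1 + ε * μ))) ^ 2 := by
  have : Nonempty (Fin n) := ⟨⟨0, hn⟩⟩
  have hne := prod_ne_zero_iff.1 (hprod ▸ (pow_pos hμ n).ne')
  have hlam_pos (i : Fin n) : 0 < lam i := (hlam i).lt_of_ne (hne i (mem_univ i)).symm
  have h := one_add_div_geom_mean_one_add_le (fun i => mul_pos hε (hlam_pos i)) hsmall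
    (mul_pos hε hμ) (by rw [prod_mul_distrib, prod_const, card_univ, Fintype.card_fin, hprod, mul_pow])
  rw [Fintype.card_fin] at h
  rwa [one_div, inv_mul_eq_div]
end
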